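/- Let L be an orthomodular lattice and f a conditional state on L with L_c = L∖{0}. If a ⟂ b, a ∈ L_c with f(a,1) ≠ 0, and f(b,1) = 0, then f(b, a∨b) = 0, f(a, a∨b) = 1, and consequently f(c, a∨b) = f(c,a) for every c ∈ L. -/

import Mathlib

/-- An orthomodular lattice: a bounded lattice with an orthocomplementation
satisfying `aᶜᶜ = a`, `a ⊔ aᶜ = ⊤`, antitonicity, and the orthomodular law. -/
class OML (L : Type*) extends Lattice L, BoundedOrder L, Compl L where
  compl_compl : ∀ a : L, aᶜᶜ = a
  sup_compl : ∀ a : L, a ⊔ aᶜ = ⊤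
  compl_antitone : ∀ a b : L, a ≤ b → bᶜ ≤ aᶜ
  orthomodular : ∀ a b : L, a ≤ b → b = a ⊔ (aᶜ ⊓ b)

/-- Orthogonality: `a ⟂ b` iff `a ≤ bᶜ`. -/
def Orth {L : Type*} [OML L] (a b : L) : Prop := a ≤ bᶜ

/-- A conditional state on an OML `L` with conditioning system `L_c = L \ {0}`:
for each `b ≠ ⊥`, `f(·,b)` is a state on `L` with values in `[0,1]`, `f(b,b)=1`,
and the chain rule holds over finite families of mutually orthogonal nonzero
elements. -/
structure CondState (L : Type*) [OML L] where
  f : L → L → ℝ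
  nonneg : ∀ a b, b ≠ ⊥ → 0 ≤ f a b
  le_one : ∀ a b, b ≠ ⊥ → f a b ≤ 1
  map_bot : ∀ b, b ≠ ⊥ → f ⊥ b = 0
  map_top : ∀ b, b ≠ ⊥ → f ⊤ b = 1
  add : ∀ a c b, b ≠ ⊥ → Orth a c → f (a ⊔ c) b = f a b + f c b
  diag : ∀ b, b ≠ ⊥ → f b b = 1
  chain : ∀ s : Finset L, s.Nonempty → (∀ a ∈ s, a ≠ ⊥) →
    (↑s : Set L).Pairwise Orth →
    ∀ e, f e (s.sup id) = ∑ a ∈ s, f a (s.sup id) * f e a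

/-!
Put `d = a ⊔ b`. The chain rule for the orthogonal pair `d, dᶜ` gives
`f(b,1) ≥ f(d,1) f(b,d)`, and `f(d,1) = f(a,1) + f(b,1) = f(a,1) > 0`, so `f(b,d) = 0`.
Additivity of `f(·,d)` together with `f(d,d) = 1` then gives `f(a,d) = 1`, and the chain rule
for the pair `a, b` collapses to `f(c,d) = f(c,a)`.
-/

namespace OML

variable {L : Type*} [OML L]

theorem compl_bot : (⊥ : L)ᶜ = ⊤ := by
  simpa using sup_compl (⊥ : L)

theorem compl_top : (⊤ : L)ᶜ = ⊥ := by
  rw [← OML.compl_bot, compl_compl]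

theorem eq_bot_of_le_compl_self {a : L} (h : a ≤ aᶜ) : a = ⊥ := by
  have hcompl : aᶜ = ⊤ := by rw [← sup_compl a, sup_eq_right.mpr h]
  rw [← compl_compl a, hcompl, OML.compl_top]

end OML

section Orth

variable {L : Type*} [OML L]

theorem Orth.symm {a b : L} (h : Orth a b) : Orth b a := by
  simpa only [Orth, OML.compl_compl] using OML.compl_antitone a bᶜ h

theorem orth_compl_self (a : L) : Orth a aᶜ :=
  (OML.compl_compl a).ge

end Orth

namespace CondState

variable {L : Type*} [OML L] (F : CondState L)

theorem f_add_f_sup_eq_one {x y : L} (hxy : Orth x y) (hne : x ⊔ y ≠ ⊥) :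
    F.f x (x ⊔ y) + F.f y (x ⊔ y) = 1 := by
  rw [← F.add x y _ hne hxy, F.diag _ hne]

theorem mul_f_nonneg {y z : L} (hz : z ≠ ⊥) (e : L) : 0 ≤ F.f y z * F.f e y := by
  by_cases hy : y = ⊥
  · simp [hy, F.map_bot z hz]
  · exact mul_nonneg (F.nonneg y z hz) (F.nonneg e y hy)

/-- The chain rule for a pair; `y = ⊥` is allowed since then both sides reduce to `f(e,x)`. -/
theorem f_sup_of_orth {x y : L} (hx : x ≠ ⊥) (hxy : Orth x y) (e : L) :
    F.f e (x ⊔ y) = F.f x (x ⊔ y) * F.f e x + F.f y (x ⊔ y) * F.f e y := by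
  classical
  by_cases hy : y = ⊥
  · simp [hy, F.diag x hx, F.map_bot x hx]
  have hne : x ≠ y := by
    rintro rfl
    exact hx (OML.eq_bot_of_le_compl_self hxy)
  have hpair : ((({x, y} : Finset L) : Set L)).Pairwise Orth := by
    rw [Finset.coe_pair]
    exact Set.pairwise_pair.2 fun _ => ⟨hxy, hxy.symm⟩
  simpa [Finset.sum_pair hne] using
    F.chain {x, y} (Finset.insert_nonempty _ _) (by simp [hx, hy]) hpair e

theorem mul_f_le_f_top {d : L} (hd : d ≠ ⊥) (e : L) : F.f d ⊤ * F.f e d ≤ F.f e ⊤ := by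
  have htop : (⊤ : L) ≠ ⊥ := ne_bot_of_le_ne_bot hd le_top
  have hchain := F.f_sup_of_orth hd (orth_compl_self d) e
  rw [OML.sup_compl] at hchain
  linarith [F.mul_f_nonneg (y := dᶜ) htop e]

theorem f_eq_zero_of_f_top_eq_zero {d e : L} (hd : d ≠ ⊥) (hd1 : F.f d ⊤ ≠ 0)
    (he : F.f e ⊤ = 0) : F.f e d = 0 := by
  have hpos : 0 < F.f d ⊤ := (F.nonneg d ⊤ (ne_bot_of_le_ne_bot hd le_top)).lt_of_ne' hd1
  have hle : F.f d ⊤ * F.f e d ≤ 0 := he ▸ F.mul_f_le_f_top hd e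
  exact le_antisymm (nonpos_of_mul_nonpos_right hle hpos) (F.nonneg e d hd)

end CondState

theorem condState_join_null_part {L : Type*} [OML L] (F : CondState L)
    (a b : L) (hab : Orth a b) (ha : a ≠ ⊥) (ha1 : F.f a ⊤ ≠ 0)
    (hb1 : F.f b ⊤ = 0) :
    F.f b (a ⊔ b) = 0 ∧ F.f a (a ⊔ b) = 1 ∧ ∀ c : L, F.f c (a ⊔ b) = F.f c a := by
  have hd : a ⊔ b ≠ ⊥ := ne_bot_of_le_ne_bot ha le_sup_left
  have hd1 : F.f (a ⊔ b) ⊤ ≠ 0 := by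
    rwa [F.add a b ⊤ (ne_bot_of_le_ne_bot ha le_top) hab, hb1, add_zero]
  have hbd : F.f b (a ⊔ b) = 0 := F.f_eq_zero_of_f_top_eq_zero hd hd1 hb1
  have had : F.f a (a ⊔ b) = 1 := by linarith [F.f_add_f_sup_eq_one hab hd]
  refine ⟨hbd, had, fun c => ?_⟩
  rw [F.f_sup_of_orth ha hab c, had, hbd]
  ring
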